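/- Suppose families s_i ∈ ℂ[λ] (i ∈ ℤ) satisfy, for fixed a,a',b,b' ∈ ℂ and all i,j ∈ ℤ: s_i(μ)·((a'−a)λ + b'−b − μ) + λ·s_i(μ) = ((1/2)λ − μ)·s_{i+j}(λ+μ) as polynomials in λ,μ, and some s_i is nonzero. Then all s_i are equal to a single nonzero constant γ, a' = a − 1/2, and b' = b. -/

import Mathlib

open Polynomial

/-!
Specialising `λ = 0, j = 0` leaves `s_i(μ)(b' - b) = 0`, so `b' = b`. Specialising `μ = 0`
then gives `λ s_{i+j}(λ) = 2 (a' - a + 1) s_i(0) λ`, so every `s_k` is the same constant `γ`,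
nonzero because some `s_i` is. Finally `λ = 1, μ = 0` reads `γ (a' - a + 1/2) = 0`.
-/

theorem Polynomial.eq_C_of_eval_eq_of_ne {R : Type*} [CommRing R] [IsDomain R] [Infinite R]
    {p : R[X]} {c x₀ : R} (hp : ∀ x, x ≠ x₀ → p.eval x = c) : p = C c :=
  eq_of_infinite_eval_eq p (C c) <|
    (Set.finite_singleton x₀).infinite_compl.mono fun x hx => by simp [hp x hx]

/-- The identity obtained from the coefficient of `∂` in the `λ`-action of `G_i` on the even
generator; `l` and `m` stand for `λ` and `μ`. -/
def GActionRelation (a a' b b' : ℂ) (s : ℤ → ℂ[X]) : Prop :=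
  ∀ (i j : ℤ) (l m : ℂ),
    (s i).eval m * ((a' - a) * l + b' - b - m) + l * (s i).eval m
      = ((1/2) * l - m) * (s (i + j)).eval (l + m)

namespace GActionRelation

variable {a a' b b' : ℂ} {s : ℤ → ℂ[X]}

theorem b'_eq (h : GActionRelation a a' b b' s) {i : ℤ} (hi : s i ≠ 0) : b' = b := by
  obtain ⟨m, hm⟩ : ∃ m, (s i).eval m ≠ 0 := by
    by_contra! hz
    exact hi (Polynomial.funext fun m => by simp [hz m])
  have hrel := h i 0 0 m
  simp only [add_zero, zero_add] at hrel
  have hb : (s i).eval m * (b' - b) = 0 := by linear_combination hrel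
  exact sub_eq_zero.mp ((mul_eq_zero.mp hb).resolve_left hm)

theorem eq_C (h : GActionRelation a a' b b' s)
    (hb : b' = b) (i k : ℤ) : s k = C (2 * (a' - a + 1) * (s i).eval 0) := by
  refine eq_C_of_eval_eq_of_ne (x₀ := 0) fun l hl => mul_left_cancel₀ hl ?_
  have hrel := h i (k - i) l 0
  rw [add_sub_cancel, add_zero, hb] at hrel
  linear_combination -2 * hrel

end GActionRelation

theorem stmt6 (a a' b b' : ℂ) (s : ℤ → Polynomial ℂ)
    (h : ∀ (i j : ℤ) (l m : ℂ),
      (s i).eval m * ((a' - a)*l + b' - b - m) + l * (s i).eval m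
        = ((1/2)*l - m) * (s (i+j)).eval (l + m))
    (hne : ∃ i : ℤ, s i ≠ 0) :
    (∃ γ : ℂ, γ ≠ 0 ∧ ∀ i : ℤ, s i = Polynomial.C γ) ∧ a' = a - 1/2 ∧ b' = b := by
  obtain ⟨i, hi⟩ := hne
  have hb := GActionRelation.b'_eq h hi
  set γ := 2 * (a' - a + 1) * (s i).eval 0
  have hs : ∀ k, s k = C γ := GActionRelation.eq_C h hb i
  have hγ : γ ≠ 0 := fun hγ => hi (by rw [hs i, hγ, map_zero])
  have hrel := h i 0 1 0
  simp only [hs, eval_C, hb] at hrel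
  have ha : γ * (a' - (a - 1/2)) = 0 := by linear_combination hrel
  refine ⟨⟨γ, hγ, hs⟩, ?_, hb⟩
  exact sub_eq_zero.mp ((mul_eq_zero.mp ha).resolve_left hγ)
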